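/- Fix real numbers q > 1 and y ∈ ℝ, and let ρ ∈ ℝ with ρ ≠ 0 satisfy ρ² = q^{−m} for some nonnegative integer m. Then there exists a probability measure μ on ℝ, supported on exactly m+1 points, such that ∫ H_n(x|q) dμ(x) = ρ^n·H_n(y|q) for all n ≥ 1. -/

import Mathlib

/-!
Let `P_k` be the rescaled Al-Salam–Chihara polynomials,
`x P_k = P_{k+1} + ρ y q^k P_k + (1 - ρ² q^{k-1}) [k]_q P_{k-1}`. The `q`-Hermite polynomials
expand as `H_n(x) = ∑_k [n, k]_q ρ^{n-k} H_{n-k}(y) P_k(x)`, so it suffices to find a probability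
measure with `∫ P_k = δ_{k0}`. When `ρ² = q^{-m}` the coefficients `b_1, …, b_m` of `P_{k-1}` are
positive and `b_{m+1} = 0`. Hence the `(m+1) × (m+1)` Jacobi matrix `J` of the recurrence is
symmetric and `P_k(J) e₀ = √(b_1 ⋯ b_k) e_k`, which vanishes for `k > m`. The spectral measure of
`J` at `e₀` therefore has moments `∫ P_k = ⟪e₀, P_k(J) e₀⟫ = δ_{k0}`, and it has exactly `m + 1`
atoms because `e₀` is a cyclic vector of `J`.
-/

open MeasureTheory Finset

noncomputable section

/-- The `q`-integer `[n]_q = 1 + q + ⋯ + q^{n-1}`. -/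
def qInt (q : ℝ) (n : ℕ) : ℝ := ∑ i ∈ Finset.range n, q ^ i

/-- The (renormalized) continuous `q`-Hermite polynomials, as functions:
`H_{-1} = 0`, `H_0 = 1`, `H_{n+1}(x) = x H_n(x) - [n]_q H_{n-1}(x)`. -/
def qHermite (q : ℝ) : ℕ → ℝ → ℝ
  | 0 => fun _ => 1
  | 1 => fun x => x
  | n + 2 => fun x => x * qHermite q (n + 1) x - qInt q (n + 1) * qHermite q n x

open Polynomial

lemma qInt_zero (q : ℝ) : qInt q 0 = 0 := by simp [qInt]

lemma qInt_add (q : ℝ) (a b : ℕ) : qInt q (a + b) = qInt q a + q ^ a * qInt q b := by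
  simp only [qInt, sum_range_add, pow_add, mul_sum]

lemma qInt_succ (q : ℝ) (n : ℕ) : qInt q (n + 1) = 1 + q * qInt q n := by
  rw [add_comm, qInt_add]; simp [qInt]

lemma qInt_pos {q : ℝ} (hq : 0 < q) {n : ℕ} (hn : n ≠ 0) : 0 < qInt q n :=
  sum_pos (fun i _ => pow_pos hq i) (nonempty_range_iff.mpr hn)

lemma qHermite_succ_succ (q : ℝ) (n : ℕ) (x : ℝ) :
    qHermite q (n + 2) x = x * qHermite q (n + 1) x - qInt q (n + 1) * qHermite q n x := rfl

def qBinom (q : ℝ) : ℕ → ℕ → ℝ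
  | _, 0 => 1
  | 0, _ + 1 => 0
  | n + 1, k + 1 => qBinom q n k + q ^ (k + 1) * qBinom q n (k + 1)

@[simp]
lemma qBinom_zero_right (q : ℝ) (n : ℕ) : qBinom q n 0 = 1 := by cases n <;> rfl

lemma qBinom_succ_succ (q : ℝ) (n k : ℕ) :
    qBinom q (n + 1) (k + 1) = qBinom q n k + q ^ (k + 1) * qBinom q n (k + 1) := rfl

lemma qBinom_eq_zero_of_lt (q : ℝ) {n k : ℕ} (h : n < k) : qBinom q n k = 0 := by
  induction n generalizing k with
  | zero => obtain ⟨k, rfl⟩ := Nat.exists_eq_succ_of_ne_zero h.ne'; rfl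
  | succ n ih =>
    obtain ⟨k, rfl⟩ := Nat.exists_eq_succ_of_ne_zero (Nat.ne_zero_of_lt h)
    rw [qBinom_succ_succ, ih (by omega), ih (by omega), mul_zero, add_zero]

@[simp]
lemma qBinom_self (q : ℝ) (n : ℕ) : qBinom q n n = 1 := by
  induction n with
  | zero => rfl
  | succ n ih => rw [qBinom_succ_succ, ih, qBinom_eq_zero_of_lt q (Nat.lt_succ_self n)]; ring

lemma qInt_sub_mul_qBinom (q : ℝ) (n k : ℕ) :
    qInt q (n - k) * qBinom q n k = qInt q (k + 1) * qBinom q n (k + 1) := by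
  induction n generalizing k with
  | zero => simp [qInt_zero, qBinom_eq_zero_of_lt]
  | succ n ih =>
    rcases Nat.lt_or_ge n k with hnk | hkn
    · rw [qBinom_eq_zero_of_lt q (show n + 1 < k + 1 by omega), show n + 1 - k = 0 by omega,
        qInt_zero, zero_mul, mul_zero]
    cases k with
    | zero =>
      have h := ih 0
      simp only [Nat.sub_zero, qBinom_zero_right, mul_one, qInt_succ, qInt_zero] at h
      simp [qBinom_succ_succ, qInt_succ, qInt_zero, h]
    | succ k =>
      have hsplit₁ := qInt_add q (k + 1) (n - k)
      have hsplit₂ := qInt_add q (k + 2) (n - (k + 1))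
      rw [show k + 1 + (n - k) = n + 1 by omega] at hsplit₁
      rw [show k + 2 + (n - (k + 1)) = n + 1 by omega] at hsplit₂
      rw [show n + 1 - (k + 1) = n - k by omega, qBinom_succ_succ, qBinom_succ_succ]
      linear_combination ih k + q ^ (k + 2) * ih (k + 1) + qBinom q n (k + 1) * (hsplit₂ - hsplit₁)

lemma qInt_succ_mul_qBinom_succ_succ (q : ℝ) (n k : ℕ) :
    qInt q (k + 1) * qBinom q (n + 1) (k + 1) = qInt q (n + 1) * qBinom q n k := by
  rcases Nat.lt_or_ge n k with hnk | hkn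
  · rw [qBinom_eq_zero_of_lt q hnk, qBinom_eq_zero_of_lt q (by omega : n + 1 < k + 1)]; ring
  have hsplit := qInt_add q (k + 1) (n - k)
  rw [show k + 1 + (n - k) = n + 1 by omega] at hsplit
  rw [qBinom_succ_succ, hsplit]
  linear_combination q ^ (k + 1) * (qInt_sub_mul_qBinom q n k).symm

def threeTermPoly (a b : ℕ → ℝ) : ℕ → ℝ[X]
  | 0 => 1
  | 1 => X - C (a 0)
  | k + 2 => (X - C (a (k + 1))) * threeTermPoly a b (k + 1) - C (b (k + 1)) * threeTermPoly a b k

namespace threeTermPoly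

variable (a b : ℕ → ℝ)

lemma succ_succ (k : ℕ) :
    threeTermPoly a b (k + 2) =
      (X - C (a (k + 1))) * threeTermPoly a b (k + 1) - C (b (k + 1)) * threeTermPoly a b k := rfl

lemma X_mul_sum (d : ℕ → ℝ) (N : ℕ) :
    X * ∑ k ∈ range (N + 1), C (d k) * threeTermPoly a b k =
      ∑ k ∈ range (N + 1), C (d k) * threeTermPoly a b (k + 1)
        + ∑ k ∈ range (N + 1), C (a k * d k) * threeTermPoly a b k
        + ∑ k ∈ range N, C (b (k + 1) * d (k + 1)) * threeTermPoly a b k := by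
  induction N with
  | zero => simp [threeTermPoly]; ring
  | succ N ih =>
    rw [sum_range_succ _ (N + 1), mul_add, ih, sum_range_succ _ (N + 1), sum_range_succ _ (N + 1),
      sum_range_succ (fun k => C (b (k + 1) * d (k + 1)) * threeTermPoly a b k) N, succ_succ]
    simp only [C_mul]
    ring

end threeTermPoly

def alSalamChiharaB (q ρ : ℝ) (k : ℕ) : ℝ := (1 - ρ ^ 2 * q ^ (k - 1)) * qInt q k

/-- Monic Al-Salam–Chihara polynomials, rescaled to the normalization of `qHermite`. -/
def alSalamChihara (q y ρ : ℝ) : ℕ → ℝ[X] :=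
  threeTermPoly (fun k => ρ * y * q ^ k) (alSalamChiharaB q ρ)

def qHermiteCoeff (q y ρ : ℝ) (n k : ℕ) : ℝ := qBinom q n k * ρ ^ (n - k) * qHermite q (n - k) y

section Connection

variable (q y ρ : ℝ)

local notation "c" => qHermiteCoeff q y ρ
local notation "P" => alSalamChihara q y ρ

lemma qHermiteCoeff_succ_succ (n k : ℕ) :
    c (n + 2) (k + 1) = c (n + 1) k
      + q ^ (k + 1) * qBinom q (n + 1) (k + 1) * ρ ^ (n + 1 - k) * qHermite q (n + 1 - k) y := by
  unfold qHermiteCoeff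
  rw [qBinom_succ_succ q (n + 1) k, show n + 2 - (k + 1) = n + 1 - k by omega]
  ring

lemma qHermiteCoeff_recurrence {n k : ℕ} (hk : k ≤ n) :
    q ^ k * qBinom q (n + 1) k * ρ ^ (n + 2 - k) * qHermite q (n + 2 - k) y =
      ρ * y * q ^ k * c (n + 1) k + (1 - ρ ^ 2 * q ^ k) * qInt q (k + 1) * c (n + 1) (k + 1)
        - qInt q (n + 1) * c n k := by
  obtain ⟨d, rfl⟩ := Nat.exists_eq_add_of_le hk
  have hlower := qInt_succ_mul_qBinom_succ_succ q (k + d) k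
  have hupper := qInt_sub_mul_qBinom q (k + d + 1) k
  simp only [qHermiteCoeff, show k + d + 2 - k = d + 2 by omega,
    show k + d + 1 - k = d + 1 by omega, show k + d + 1 - (k + 1) = d by omega,
    show k + d - k = d by omega, qHermite_succ_succ] at *
  linear_combination (-(ρ ^ d) * qHermite q d y) * hlower
    - (q ^ k * ρ ^ (d + 2) * qHermite q d y) * hupper

lemma sum_qHermiteCoeff_succ_succ (n : ℕ) :
    ∑ k ∈ range (n + 3), C (c (n + 2) k) * P k =
      X * ∑ k ∈ range (n + 2), C (c (n + 1) k) * P k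
        - C (qInt q (n + 1)) * ∑ k ∈ range (n + 1), C (c n k) * P k := by
  set r : ℕ → ℝ := fun k => q ^ k * qBinom q (n + 1) k * ρ ^ (n + 2 - k) * qHermite q (n + 2 - k) y
  have hraise : ∑ k ∈ range (n + 3), C (c (n + 2) k) * P k =
      ∑ k ∈ range (n + 2), C (c (n + 1) k) * P (k + 1) + ∑ k ∈ range (n + 3), C (r k) * P k := by
    rw [sum_range_succ' _ (n + 2), sum_range_succ' (fun k => C (r k) * P k) (n + 2)]
    simp only [qHermiteCoeff_succ_succ, C_add, add_mul, sum_add_distrib]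
    simp [r, qHermiteCoeff]
    ring
  rw [hraise, alSalamChihara, threeTermPoly.X_mul_sum, ← alSalamChihara,
    sum_range_succ (fun k => C (r k) * P k) (n + 2),
    sum_range_succ (fun k => C (r k) * P k) (n + 1),
    sum_range_succ (fun k => C (ρ * y * q ^ k * c (n + 1) k) * P k) (n + 1)]
  have htop : r (n + 2) = 0 := by simp [r, qBinom_eq_zero_of_lt]
  have hnext : r (n + 1) = ρ * y * q ^ (n + 1) * c (n + 1) (n + 1) := by
    simp [r, qHermiteCoeff, qHermite]
    ring
  have hlow : ∑ k ∈ range (n + 1), C (r k) * P k =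
      ∑ k ∈ range (n + 1), (C (ρ * y * q ^ k * c (n + 1) k) * P k
        + C ((1 - ρ ^ 2 * q ^ k) * qInt q (k + 1) * c (n + 1) (k + 1)) * P k
        - C (qInt q (n + 1)) * (C (c n k) * P k)) := by
    refine sum_congr rfl fun k hk => ?_
    rw [show r k = _ from qHermiteCoeff_recurrence q y ρ (mem_range_succ_iff.mp hk)]
    simp only [C_sub, C_add, C_mul]
    ring
  rw [htop, hnext, hlow, sum_sub_distrib, sum_add_distrib, mul_sum]
  simp only [alSalamChiharaB, Nat.add_sub_cancel, C_0, zero_mul, add_zero]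
  ring

end Connection

theorem qHermite_eq_eval_sum_qHermiteCoeff (q y ρ x : ℝ) (n : ℕ) :
    qHermite q n x =
      (∑ k ∈ range (n + 1), C (qHermiteCoeff q y ρ n k) * alSalamChihara q y ρ k).eval x := by
  induction n using Nat.twoStepInduction with
  | zero => simp [qHermiteCoeff, alSalamChihara, threeTermPoly, qHermite]
  | one => simp [sum_range_succ, qHermiteCoeff, alSalamChihara, threeTermPoly, qHermite]
  | more n ih₀ ih₁ =>
    rw [sum_qHermiteCoeff_succ_succ, qHermite_succ_succ, ih₀, ih₁]
    simp

open scoped RealInnerProductSpace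

namespace LinearMap.IsSymmetric

lemma aeval {E : Type*} [NormedAddCommGroup E] [InnerProductSpace ℝ E] {T : E →ₗ[ℝ] E}
    (hT : T.IsSymmetric) (p : ℝ[X]) : (aeval T p).IsSymmetric := by
  induction p using Polynomial.induction_on' with
  | add p r hp hr => simpa using hp.add hr
  | monomial k a =>
    rw [aeval_monomial, ← Algebra.smul_def]
    exact (hT.pow k).smul (conj_trivial a)

variable {E : Type*} [NormedAddCommGroup E] [InnerProductSpace ℝ E] [FiniteDimensional ℝ E]
  {T : E →ₗ[ℝ] E} {n : ℕ} (hT : T.IsSymmetric) (hn : Module.finrank ℝ E = n) (v : E)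

lemma inner_eigenvectorBasis_aeval (p : ℝ[X]) (w : E) (i : Fin n) :
    ⟪hT.eigenvectorBasis hn i, Polynomial.aeval T p w⟫ =
      p.eval (hT.eigenvalues hn i) * ⟪hT.eigenvectorBasis hn i, w⟫ := by
  rw [← hT.aeval p, Module.End.aeval_apply_of_hasEigenvector
    (hT.hasEigenvector_eigenvectorBasis hn i), real_inner_smul_left]
  rfl

def spectralMeasure : Measure ℝ :=
  ∑ i, ENNReal.ofReal (⟪hT.eigenvectorBasis hn i, v⟫ ^ 2) • Measure.dirac (hT.eigenvalues hn i)

lemma integrable_spectralMeasure (f : ℝ → ℝ) : Integrable f (hT.spectralMeasure hn v) :=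
  integrable_finsetSum_measure.mpr fun _ _ =>
    (integrable_dirac (by simp)).smul_measure ENNReal.ofReal_ne_top

lemma integral_spectralMeasure (f : ℝ → ℝ) :
    ∫ x, f x ∂hT.spectralMeasure hn v =
      ∑ i, ⟪hT.eigenvectorBasis hn i, v⟫ ^ 2 * f (hT.eigenvalues hn i) := by
  rw [spectralMeasure, integral_finsetSum_measure fun _ _ =>
    (integrable_dirac (by simp)).smul_measure ENNReal.ofReal_ne_top]
  refine sum_congr rfl fun i _ => ?_
  rw [integral_smul_measure, integral_dirac, ENNReal.toReal_ofReal (sq_nonneg _), smul_eq_mul]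

lemma integral_eval_spectralMeasure (p : ℝ[X]) :
    ∫ x, p.eval x ∂hT.spectralMeasure hn v = ⟪v, Polynomial.aeval T p v⟫ := by
  rw [integral_spectralMeasure, ← (hT.eigenvectorBasis hn).sum_inner_mul_inner]
  refine sum_congr rfl fun i _ => ?_
  rw [inner_eigenvectorBasis_aeval, real_inner_comm]
  ring

lemma isProbabilityMeasure_spectralMeasure (hv : ‖v‖ = 1) :
    IsProbabilityMeasure (hT.spectralMeasure hn v) := by
  constructor
  simp only [spectralMeasure, Measure.coe_finsetSum, Finset.sum_apply, Measure.smul_apply,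
    measure_univ, smul_eq_mul, mul_one]
  rw [← ENNReal.ofReal_sum_of_nonneg fun _ _ => sq_nonneg _,
    (hT.eigenvectorBasis hn).sum_sq_inner_right, hv, one_pow, ENNReal.ofReal_one]

def spectralSupport : Finset ℝ :=
  (univ.filter fun i => ⟪hT.eigenvectorBasis hn i, v⟫ ≠ 0).image (hT.eigenvalues hn)

lemma spectralMeasure_compl_spectralSupport :
    hT.spectralMeasure hn v (↑(hT.spectralSupport hn v))ᶜ = 0 := by
  rw [spectralMeasure, Measure.finsetSum_apply]
  refine sum_eq_zero fun i _ => ?_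
  by_cases hi : ⟪hT.eigenvectorBasis hn i, v⟫ = 0
  · simp [hi]
  · have hmem : hT.eigenvalues hn i ∈ hT.spectralSupport hn v :=
      mem_image_of_mem _ (mem_filter.mpr ⟨mem_univ i, hi⟩)
    simp [hmem]

lemma spectralMeasure_singleton_ne_zero {x : ℝ} (hx : x ∈ hT.spectralSupport hn v) :
    hT.spectralMeasure hn v {x} ≠ 0 := by
  obtain ⟨i, hi, rfl⟩ := mem_image.mp hx
  rw [spectralMeasure, Measure.finsetSum_apply, Ne, sum_eq_zero_iff, not_forall]
  refine ⟨i, fun h => (mem_filter.mp hi).2 ?_⟩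
  simpa [ENNReal.ofReal_eq_zero] using h

lemma aeval_prod_spectralSupport :
    Polynomial.aeval T (∏ t ∈ hT.spectralSupport hn v, (X - C t)) v = 0 := by
  nth_rw 2 [← (hT.eigenvectorBasis hn).sum_repr' v]
  rw [map_sum]
  refine sum_eq_zero fun i _ => ?_
  rw [map_smul, Module.End.aeval_apply_of_hasEigenvector (hT.hasEigenvector_eigenvectorBasis hn i)]
  by_cases hi : ⟪hT.eigenvectorBasis hn i, v⟫ = 0
  · rw [hi, zero_smul]
  · have hmem : hT.eigenvalues hn i ∈ hT.spectralSupport hn v :=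
      mem_image_of_mem _ (mem_filter.mpr ⟨mem_univ i, hi⟩)
    rw [eval_prod, prod_eq_zero hmem (by simp), zero_smul, smul_zero]

lemma card_spectralSupport (hv : ∀ w, ∃ p : ℝ[X], Polynomial.aeval T p v = w) :
    (hT.spectralSupport hn v).card = n := by
  refine le_antisymm ?_ ?_
  · exact card_image_le.trans ((card_filter_le _ _).trans (by simp))
  set s := hT.spectralSupport hn v
  set Q : ℝ[X] := ∏ t ∈ s, (X - C t)
  have hQ : Q.Monic := monic_prod_of_monic _ _ fun t _ => monic_X_sub_C t
  let L : ℝ[X] →ₗ[ℝ] E := LinearMap.applyₗ v ∘ₗ (Polynomial.aeval T).toLinearMap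
  have hQv : Polynomial.aeval T Q v = 0 := hT.aeval_prod_spectralSupport hn v
  have hrange : ⊤ ≤ (degreeLT ℝ s.card).map L := by
    intro w _
    obtain ⟨p, rfl⟩ := hv w
    refine ⟨p %ₘ Q, mem_degreeLT.mpr ?_, ?_⟩
    · refine (degree_modByMonic_lt p hQ).trans_eq ?_
      rw [degree_eq_natDegree hQ.ne_zero]
      simp [Q]
    · change Polynomial.aeval T (p %ₘ Q) v = Polynomial.aeval T p v
      conv_rhs => rw [← modByMonic_add_div p Q]
      rw [map_add, LinearMap.add_apply, mul_comm, map_mul, Module.End.mul_apply, hQv, map_zero,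
        add_zero]
  calc n = Module.finrank ℝ (⊤ : Submodule ℝ E) := by rw [finrank_top, hn]
    _ ≤ Module.finrank ℝ ((degreeLT ℝ s.card).map L) := Submodule.finrank_mono hrange
    _ ≤ Module.finrank ℝ (degreeLT ℝ s.card) := Submodule.finrank_map_le _ _
    _ = s.card := by rw [(degreeLTEquiv ℝ s.card).finrank_eq, Module.finrank_fin_fun]

end LinearMap.IsSymmetric

section Jacobi

variable (a b : ℕ → ℝ) (m : ℕ)

def jacobiMatrix : Matrix (Fin (m + 1)) (Fin (m + 1)) ℝ :=
  Matrix.of fun i j => (if (i : ℕ) = j then a i else 0) + (if (i : ℕ) + 1 = j then √(b j) else 0)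
    + (if (j : ℕ) + 1 = i then √(b i) else 0)

/-- The `k`-th standard basis vector of `ℝ^{m+1}`, extended by `0` for `k > m`. -/
def stdVec (k : ℕ) : EuclideanSpace ℝ (Fin (m + 1)) :=
  WithLp.toLp 2 fun i => if (i : ℕ) = k then 1 else 0

lemma stdVec_eq_zero {k : ℕ} (hk : m < k) : stdVec m k = 0 := by
  ext i
  simp [stdVec, show (i : ℕ) ≠ k by omega]

lemma stdVec_eq_single {k : ℕ} (hk : k ≤ m) :
    stdVec m k = EuclideanSpace.single ⟨k, Nat.lt_succ_of_le hk⟩ 1 := by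
  ext i
  simp [stdVec, Fin.ext_iff]

lemma isSymmetric_jacobiMatrix : (jacobiMatrix a b m).toEuclideanLin.IsSymmetric := by
  rw [Matrix.isSymmetric_toEuclideanLin_iff]
  ext i j
  simp only [jacobiMatrix, Matrix.conjTranspose_apply, Matrix.of_apply, star_trivial]
  split_ifs <;> first | omega | simp_all

lemma toEuclideanLin_jacobiMatrix_stdVec {k : ℕ} (hk : k ≤ m) (i : Fin (m + 1)) :
    (jacobiMatrix a b m).toEuclideanLin (stdVec m k) i =
      jacobiMatrix a b m i ⟨k, Nat.lt_succ_of_le hk⟩ := by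
  rw [stdVec_eq_single m hk]
  simp

lemma toEuclideanLin_jacobiMatrix_stdVec_zero :
    (jacobiMatrix a b m).toEuclideanLin (stdVec m 0) = a 0 • stdVec m 0 + √(b 1) • stdVec m 1 := by
  ext i
  rw [toEuclideanLin_jacobiMatrix_stdVec a b m (Nat.zero_le m)]
  simp only [jacobiMatrix, stdVec, Matrix.of_apply, PiLp.add_apply, PiLp.smul_apply]
  split_ifs <;> first | omega | simp_all

lemma toEuclideanLin_jacobiMatrix_stdVec_succ {k : ℕ} (hk : k + 1 ≤ m) :
    (jacobiMatrix a b m).toEuclideanLin (stdVec m (k + 1)) =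
      √(b (k + 1)) • stdVec m k + a (k + 1) • stdVec m (k + 1)
        + √(b (k + 2)) • stdVec m (k + 2) := by
  ext i
  rw [toEuclideanLin_jacobiMatrix_stdVec a b m hk]
  obtain ⟨j, hj⟩ := i
  simp only [jacobiMatrix, stdVec, Matrix.of_apply, PiLp.add_apply, PiLp.smul_apply]
  split_ifs <;> first | omega | (subst_vars; simp)

variable {a b m}

/-- The recurrence of `P_k` mirrors the action of `J` on the standard basis. -/
lemma aeval_jacobiMatrix_threeTermPoly (hb : ∀ k ∈ Icc 1 m, 0 ≤ b k) (hbm : b (m + 1) = 0) (k : ℕ) :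
    aeval (jacobiMatrix a b m).toEuclideanLin (threeTermPoly a b k) (stdVec m 0) =
      (∏ i ∈ range k, √(b (i + 1))) • stdVec m k := by
  induction k using Nat.twoStepInduction with
  | zero => simp [threeTermPoly]
  | one => simp [threeTermPoly, toEuclideanLin_jacobiMatrix_stdVec_zero]
  | more k ih₀ ih₁ =>
    rw [threeTermPoly.succ_succ]
    simp only [map_sub, map_mul, aeval_X, aeval_C, LinearMap.sub_apply, Module.End.mul_apply,
      Module.algebraMap_end_apply, ih₀, ih₁, map_smul]
    rcases Nat.lt_or_ge m (k + 1) with hmk | hkm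
    · rw [stdVec_eq_zero m hmk, stdVec_eq_zero m (by omega : m < k + 2)]
      rcases Nat.lt_or_ge m k with hmk' | hkm'
      · simp [stdVec_eq_zero m hmk']
      · simp [show k = m by omega, hbm]
    · rw [toEuclideanLin_jacobiMatrix_stdVec_succ a b m hkm]
      simp only [prod_range_succ]
      set β := √(b (k + 1))
      rw [← Real.mul_self_sqrt (hb _ (mem_Icc.mpr ⟨by omega, hkm⟩))]
      module

lemma aeval_jacobiMatrix_surjective (hb : ∀ k ∈ Icc 1 m, 0 < b k) (hbm : b (m + 1) = 0)
    (w : EuclideanSpace ℝ (Fin (m + 1))) :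
    ∃ p : ℝ[X], aeval (jacobiMatrix a b m).toEuclideanLin p (stdVec m 0) = w := by
  have hγ (i : Fin (m + 1)) : ∏ j ∈ range i, √(b (j + 1)) ≠ 0 :=
    prod_ne_zero_iff.mpr fun j hj =>
      (Real.sqrt_pos.mpr (hb _ (mem_Icc.mpr ⟨by omega, by simp at hj; omega⟩))).ne'
  refine ⟨∑ i : Fin (m + 1), C (w i / ∏ j ∈ range i, √(b (j + 1))) * threeTermPoly a b i, ?_⟩
  simp only [map_sum, map_mul, aeval_C, LinearMap.sum_apply, Module.End.mul_apply,
    Module.algebraMap_end_apply, aeval_jacobiMatrix_threeTermPoly (fun k hk => (hb k hk).le) hbm,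
    smul_smul, div_mul_cancel₀ _ (hγ _)]
  ext j
  simp [stdVec, Fin.val_inj]

end Jacobi

/-- A finite form of Favard's theorem. -/
theorem exists_measure_integral_threeTermPoly {a b : ℕ → ℝ} {m : ℕ} (hb : ∀ k ∈ Icc 1 m, 0 < b k)
    (hbm : b (m + 1) = 0) :
    ∃ μ : Measure ℝ, IsProbabilityMeasure μ ∧
      (∃ s : Finset ℝ, s.card = m + 1 ∧ μ (↑s)ᶜ = 0 ∧ ∀ x ∈ s, μ {x} ≠ 0) ∧
      (∀ f : ℝ → ℝ, Integrable f μ) ∧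
      ∀ k, ∫ x, (threeTermPoly a b k).eval x ∂μ = if k = 0 then 1 else 0 := by
  have hJ := isSymmetric_jacobiMatrix a b m
  have hn : Module.finrank ℝ (EuclideanSpace ℝ (Fin (m + 1))) = m + 1 := finrank_euclideanSpace_fin
  have he₀ : stdVec m 0 = EuclideanSpace.single 0 1 := stdVec_eq_single m (Nat.zero_le m)
  refine ⟨hJ.spectralMeasure hn (stdVec m 0),
    hJ.isProbabilityMeasure_spectralMeasure hn _ (by simp [he₀]),
    ⟨_, hJ.card_spectralSupport hn _ (aeval_jacobiMatrix_surjective hb hbm),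
      hJ.spectralMeasure_compl_spectralSupport hn _,
      fun _ hx => hJ.spectralMeasure_singleton_ne_zero hn _ hx⟩,
    hJ.integrable_spectralMeasure hn _, fun k => ?_⟩
  rw [hJ.integral_eval_spectralMeasure,
    aeval_jacobiMatrix_threeTermPoly (fun k hk => (hb k hk).le) hbm, real_inner_smul_right]
  nth_rw 1 [he₀]
  rcases eq_or_ne k 0 with rfl | hk
  · simp [stdVec, EuclideanSpace.inner_single_left]
  · simp [stdVec, EuclideanSpace.inner_single_left, hk, Ne.symm hk]

section AlSalamChihara

variable {q ρ : ℝ} {m : ℕ}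

lemma alSalamChiharaB_pos (hq : 1 < q) (hm : ρ ^ 2 = (q ^ m)⁻¹) :
    ∀ k ∈ Icc 1 m, 0 < alSalamChiharaB q ρ k := by
  intro k hk
  obtain ⟨hk₁, hkm⟩ := mem_Icc.mp hk
  have hlt : ρ ^ 2 * q ^ (k - 1) < 1 := by
    rw [hm, inv_mul_lt_iff₀ (by positivity), mul_one]
    exact pow_lt_pow_right₀ hq (by omega)
  exact mul_pos (by linarith) (qInt_pos (by linarith) (by omega))

lemma alSalamChiharaB_succ_eq_zero (hq : q ≠ 0) (hm : ρ ^ 2 = (q ^ m)⁻¹) :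
    alSalamChiharaB q ρ (m + 1) = 0 := by
  rw [alSalamChiharaB, Nat.add_sub_cancel, hm, inv_mul_cancel₀ (pow_ne_zero m hq), sub_self,
    zero_mul]

end AlSalamChihara

theorem exists_discrete_solution_general (q y ρ : ℝ) (hq : 1 < q)
    (m : ℕ) (hm : ρ ^ 2 = (q ^ m)⁻¹) :
    ∃ μ : Measure ℝ, IsProbabilityMeasure μ ∧
      (∃ s : Finset ℝ, s.card = m + 1 ∧ μ (↑s)ᶜ = 0 ∧ ∀ x ∈ s, μ {x} ≠ 0) ∧
      (∀ n : ℕ, 1 ≤ n → ∫ x, qHermite q n x ∂μ = ρ ^ n * qHermite q n y) := by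
  obtain ⟨μ, hμ, hsupport, hintegrable, horthogonal⟩ :=
    exists_measure_integral_threeTermPoly (a := fun k => ρ * y * q ^ k)
      (alSalamChiharaB_pos hq hm)
      (alSalamChiharaB_succ_eq_zero (zero_lt_one.trans hq).ne' hm)
  refine ⟨μ, hμ, hsupport, fun n _ => ?_⟩
  conv_lhs => enter [2, x]; rw [qHermite_eq_eval_sum_qHermiteCoeff q y ρ x n]
  simp only [eval_finsetSum, eval_mul, eval_C]
  rw [integral_finsetSum _ fun k _ => (hintegrable _).const_mul _]
  simp [integral_const_mul, alSalamChihara, horthogonal, qHermiteCoeff]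

/-- Corollary (ii): for `q > 1` and `ρ ≠ 0` with `ρ² = q^{-m}`, there exists a
probability measure `μ` on `ℝ`, supported on exactly `m + 1` points, such that
`∫ H_n(x|q) dμ(x) = ρ^n H_n(y|q)` for all `n ≥ 1`. -/
theorem exists_discrete_solution (q y ρ : ℝ) (hq : 1 < q) (hρ : ρ ≠ 0)
    (m : ℕ) (hm : ρ ^ 2 = (q ^ m)⁻¹) :
    ∃ μ : Measure ℝ, IsProbabilityMeasure μ ∧
      (∃ s : Finset ℝ, s.card = m + 1 ∧ μ (↑s)ᶜ = 0 ∧ ∀ x ∈ s, μ {x} ≠ 0) ∧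
      (∀ n : ℕ, 1 ≤ n → ∫ x, qHermite q n x ∂μ = ρ ^ n * qHermite q n y) :=
  exists_discrete_solution_general q y ρ hq m hm
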